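/- Let G = (V ∪ {Y,d,d̄}, E) be the switch graph of a terminating ARRIVAL instance, let S ⊆ V, and suppose every v ∈ V \ S has a directed path to {d, d̄} ∪ S of length at most ℓ. Then in any continuation of the Multi-Run procedure starting from a configuration with R waiting trains, at most R·((n - ℓ + 2)·2^ℓ - 2) further edge traversals occur, where n = |V|. -/

import Mathlib

variable {V : Type} [Fintype V] [DecidableEq V]

/-- An ARRIVAL instance: origin `o` and two successor functions into `V ⊕ Bool`,
where `Sum.inr false` is the destination `d` and `Sum.inr true` is `d̄`. -/
structure Arrival (V : Type) where
  o : V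
  sEven : V → V ⊕ Bool
  sOdd : V → V ⊕ Bool

/-- Destination predicate. -/
def DestP {V : Type} : V ⊕ Bool → Prop := fun u => ∃ t, u = Sum.inr t

/-- Edge relation of the switch graph (proper edges only). -/
def Arrival.Edge (A : Arrival V) (u w : V ⊕ Bool) : Prop :=
  ∃ x : V, u = Sum.inl x ∧ (w = A.sEven x ∨ w = A.sOdd x)

/-- There is a directed walk of length `m` from `u` to a vertex satisfying `P`. -/
def Arrival.PathLen (A : Arrival V) (u : V ⊕ Bool) (P : V ⊕ Bool → Prop) (m : ℕ) : Prop :=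
  ∃ f : ℕ → V ⊕ Bool, f 0 = u ∧ P (f m) ∧ ∀ i < m, A.Edge (f i) (f (i + 1))

/-- `m` is the length of a shortest directed path from `u` to a vertex satisfying `P`. -/
def Arrival.ShortestLen (A : Arrival V) (u : V ⊕ Bool) (P : V ⊕ Bool → Prop) (m : ℕ) : Prop :=
  A.PathLen u P m ∧ ∀ m' < m, ¬ A.PathLen u P m'

/-- The instance is terminating: from every vertex a destination is reachable. -/
def Arrival.Terminating (A : Arrival V) : Prop :=
  ∀ v : V, ∃ m, A.PathLen (Sum.inl v) DestP m

/-- One step of the run procedure on states (position, switch configuration);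
`false` means the current successor is the even one. Destinations are absorbing. -/
def Arrival.runStep [DecidableEq V] (A : Arrival V) :
    (V ⊕ Bool) × (V → Bool) → (V ⊕ Bool) × (V → Bool) := fun s =>
  match s.1 with
  | Sum.inr _ => s
  | Sum.inl v => ((if s.2 v then A.sOdd v else A.sEven v),
      fun u => if u = v then !s.2 v else s.2 u)

/-- The state of the run procedure after `k` proper steps (the train starts at `o`). -/
def Arrival.run [DecidableEq V] (A : Arrival V) (k : ℕ) : (V ⊕ Bool) × (V → Bool) :=
  A.runStep^[k] (Sum.inl A.o, fun _ => false)

/-- A flow on the edges of the switch graph: value on the yard edge `(Y,o)` and on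
the even/odd edge slot out of each vertex. -/
structure SFlow (V : Type) where
  yard : ℕ
  ev : V → ℕ
  od : V → ℕ

/-- Outflow `x⁺(v)` at a vertex `v ∈ V`. -/
def SFlow.out {V : Type} (x : SFlow V) (v : V) : ℕ := x.ev v + x.od v

/-- Inflow `x⁻(u)` at a vertex `u` of the switch graph. -/
def SFlow.into (A : Arrival V) (x : SFlow V) (u : V ⊕ Bool) : ℕ :=
  (if Sum.inl A.o = u then x.yard else 0) +
    ∑ v : V, ((if A.sEven v = u then x.ev v else 0) + (if A.sOdd v = u then x.od v else 0))

/-- Total flow `Σ_e x_e`. -/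
def SFlow.total [Fintype V] (x : SFlow V) : ℕ := x.yard + ∑ v : V, (x.ev v + x.od v)

/-- Switching flow: unit outflow at the yard, flow conservation at every `v ∈ V`,
and switching behavior `x_{(v,s_even(v))} - x_{(v,s_odd(v))} ∈ {0,1}`. -/
def IsSwitchingFlow (A : Arrival V) (x : SFlow V) : Prop :=
  x.yard = 1 ∧ (∀ v : V, x.out v = SFlow.into A x (Sum.inl v)) ∧
    ∀ v : V, x.od v ≤ x.ev v ∧ x.ev v ≤ x.od v + 1

/-- State of the Multi-Run procedure: `ev/od` count edge traversals so far,
`t` counts trains currently present at each vertex, and `sw v = true` means the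
current successor of `v` is the odd one. -/
structure MState (V : Type) where
  ev : V → ℕ
  od : V → ℕ
  t : V ⊕ Bool → ℕ
  sw : V → Bool

/-- Current successor. -/
def Arrival.curr (A : Arrival V) (s : MState V) (v : V) : V ⊕ Bool :=
  if s.sw v then A.sOdd v else A.sEven v

/-- Next successor. -/
def Arrival.nxt (A : Arrival V) (s : MState V) (v : V) : V ⊕ Bool :=
  if s.sw v then A.sEven v else A.sOdd v

/-- Initial state of the Multi-Run procedure: one train is started from the yard
(arriving at `o`) and `w v` trains are started from each `v ∈ S`, with `⌈w v/2⌉`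
moving to the even successor and `⌊w v/2⌋` to the odd successor. -/
def mInit (A : Arrival V) (S : Finset V) (w : V → ℕ) : MState V where
  ev := fun v => if v ∈ S then (w v + 1) / 2 else 0
  od := fun v => if v ∈ S then w v / 2 else 0
  t := fun u => (if Sum.inl A.o = u then 1 else 0) +
      ∑ v ∈ S, ((if A.sEven v = u then (w v + 1) / 2 else 0) +
        (if A.sOdd v = u then w v / 2 else 0))
  sw := fun _ => false

/-- One iteration of the Multi-Run procedure: move `τ` of the trains waiting at `v`,
`⌈τ/2⌉` to the current successor and `⌊τ/2⌋` to the next one, swapping the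
successors if `τ` is odd. -/
def MStepAt (A : Arrival V) (v : V) (τ : ℕ) (s s' : MState V) : Prop :=
  1 ≤ τ ∧ τ ≤ s.t (Sum.inl v) ∧
  s'.ev = (fun u => s.ev u + if u = v then (if s.sw v then τ / 2 else (τ + 1) / 2) else 0) ∧
  s'.od = (fun u => s.od u + if u = v then (if s.sw v then (τ + 1) / 2 else τ / 2) else 0) ∧
  s'.t = (fun u => (s.t u - if u = Sum.inl v then τ else 0) +
      ((if A.curr s v = u then (τ + 1) / 2 else 0) + (if A.nxt s v = u then τ / 2 else 0))) ∧
  s'.sw = fun u => if u = v then Bool.xor (s.sw v) (τ % 2 == 1) else s.sw u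

/-- One (nondeterministic) iteration: some vertex outside `S` with waiting trains is picked. -/
def MStep (A : Arrival V) (S : Finset V) (s s' : MState V) : Prop :=
  ∃ v ∉ S, ∃ τ, MStepAt A v τ s s'

/-- No trains are waiting outside `S`. -/
def IsFinal (S : Finset V) (s : MState V) : Prop :=
  ∀ v : V, v ∉ S → s.t (Sum.inl v) = 0

/-- Edge-traversal profile of a Multi-Run state. -/
def flowOf {V : Type} (s : MState V) : SFlow V := ⟨1, s.ev, s.od⟩

/-!
Record, for each vertex, how many trains have departed from it since `s₀`. Along any
continuation these counts determine the Multi-Run state, and a step can never push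
them above a *supersolution*: departure counts that can dispatch the waiting trains together with
all the trains they send in. So it suffices to exhibit a supersolution of total size at most
`R * ((n - ℓ + 2) * 2 ^ ℓ - 2)`, and one is obtained by running the `R` trains one after the
other, each alone until it reaches `{d, d̄} ∪ S`.

A single train visits a vertex at distance `k` from the stopping set at most `2 ^ k` times: every
other departure goes to a vertex at distance `k - 1`, and the extra visit allowed by rounding is
impossible because a vertex visited the maximal number of times is visited for the last time
exactly `k` steps before the train stops. The distances of the vertices outside `S` fill an
interval `{1, …, M}` with `M ≤ ℓ`, and summing `2 ^ k` over them gives the bound.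
-/

open Finset

/-- Among the first `n` departures from a switch that initially points to side `c` and flips
after each departure, the number that leave on side `b`. -/
def sideCount (c b : Bool) (n : ℕ) : ℕ := if b = c then (n + 1) / 2 else n / 2

@[simp] lemma sideCount_zero (c b : Bool) : sideCount c b 0 = 0 := by
  simp [sideCount]

lemma sideCount_succ (c b : Bool) (n : ℕ) :
    sideCount c b (n + 1) = sideCount c b n + if (c ^^ n.bodd) = b then 1 else 0 := by
  have := Nat.mod_two_of_bodd n
  cases c <;> cases b <;> cases h : n.bodd <;> simp_all [sideCount] <;> omega

lemma sideCount_one (c b : Bool) : sideCount c b 1 = if c = b then 1 else 0 := by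
  simpa using sideCount_succ c b 0

lemma sideCount_add (c b : Bool) (m n : ℕ) :
    sideCount c b (m + n) = sideCount c b m + sideCount (c ^^ m.bodd) b n := by
  induction n with
  | zero => simp
  | succ n ih =>
    rw [← add_assoc, sideCount_succ, sideCount_succ, ih, Nat.bodd_add, Bool.xor_assoc, add_assoc]

lemma sideCount_false_add_true (c : Bool) (n : ℕ) :
    sideCount c false n + sideCount c true n = n := by
  cases c <;> simp [sideCount] <;> omega

lemma sideCount_mono (c b : Bool) : Monotone (sideCount c b) := fun m n h => by
  unfold sideCount; split <;> omega

lemma le_two_mul_sideCount_add_one (c b : Bool) (n : ℕ) : n ≤ 2 * sideCount c b n + 1 := by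
  unfold sideCount; split <;> omega

lemma mod_two_beq_one_eq_bodd (n : ℕ) : (n % 2 == 1) = n.bodd := by
  rw [Nat.mod_two_of_bodd]; cases n.bodd <;> rfl

lemma card_filter_range_succ (P : ℕ → Prop) [DecidablePred P] (N : ℕ) :
    #{j ∈ range (N + 1) | P j} = #{j ∈ range N | P j} + if P N then 1 else 0 := by
  simp only [← Nat.count_eq_card_filter_range, Nat.count_succ]

lemma sum_mul_two_pow_add_le (c : ℕ → ℕ) (M : ℕ) (hc : ∀ k ∈ Icc 1 M, 1 ≤ c k) :
    ∑ k ∈ Icc 1 M, c k * 2 ^ k + 2 + M * 2 ^ M ≤ (∑ k ∈ Icc 1 M, c k + 2) * 2 ^ M := by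
  induction M with
  | zero => simp
  | succ M ih =>
    have ih := ih fun k hk => hc k (Icc_subset_Icc_right (by omega) hk)
    have hM : M ≤ ∑ k ∈ Icc 1 M, c k := by
      simpa using card_nsmul_le_sum _ _ 1 fun k hk => hc k (Icc_subset_Icc_right (by omega) hk)
    rw [sum_Icc_succ_top (by omega), sum_Icc_succ_top (by omega), pow_succ]
    nlinarith [Nat.mul_le_mul_right (2 ^ M) hM]

lemma monotone_sub_add_two_mul_two_pow (n : ℕ) : Monotone fun k => (n - k + 2) * 2 ^ k :=
  monotone_nat_of_le_succ fun k => by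
    rw [pow_succ, mul_comm _ 2, ← mul_assoc]
    exact Nat.mul_le_mul_right _ (by omega)

/-- The values of `d` are exactly `1, …, M` for some `M ≤ ℓ`; the sum is largest when all
points beyond one per value sit at the top value `M`. -/
lemma sum_two_pow_le {α : Type*} (F : Finset α) (d : α → ℕ) {n ℓ : ℕ} (hF : #F ≤ n)
    (hd : ∀ a ∈ F, 1 ≤ d a ∧ d a ≤ ℓ) (hladder : ∀ a ∈ F, 2 ≤ d a → ∃ b ∈ F, d b + 1 = d a) :
    ∑ a ∈ F, 2 ^ d a ≤ (n - ℓ + 2) * 2 ^ ℓ - 2 := by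
  classical
  set M := F.sup d
  have hmaps : ∀ a ∈ F, d a ∈ Icc 1 M := fun a ha => mem_Icc.2 ⟨(hd a ha).1, le_sup ha⟩
  have hfiber : ∀ k ∈ Icc 1 M, 1 ≤ #{a ∈ F | d a = k} := by
    intro k hk
    obtain ⟨hk1, hkM⟩ := mem_Icc.1 hk
    obtain ⟨a, ha, haM⟩ := exists_mem_eq_sup F (nonempty_of_ne_empty (by
      rintro rfl; simp [M] at hkM; omega)) d
    have : ∀ j < M, ∃ b ∈ F, d b = M - j := by
      intro j
      induction j with
      | zero => exact fun _ => ⟨a, ha, haM.symm⟩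
      | succ j ih =>
        intro hj
        obtain ⟨b, hb, hbd⟩ := ih (by omega)
        obtain ⟨b', hb', hb'd⟩ := hladder b hb (by omega)
        exact ⟨b', hb', by omega⟩
    obtain ⟨b, hb, hbd⟩ := this (M - k) (by omega)
    exact card_pos.2 ⟨b, mem_filter.2 ⟨hb, by omega⟩⟩
  have hsum : ∑ a ∈ F, 2 ^ d a = ∑ k ∈ Icc 1 M, #{a ∈ F | d a = k} * 2 ^ k := by
    rw [← sum_fiberwise_of_maps_to hmaps]
    refine sum_congr rfl fun k _ => ?_
    rw [sum_congr rfl fun a ha => by rw [(mem_filter.1 ha).2], sum_const, smul_eq_mul]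
  have hcard : #F = ∑ k ∈ Icc 1 M, #{a ∈ F | d a = k} := card_eq_sum_card_fiberwise hmaps
  have key := sum_mul_two_pow_add_le _ M hfiber
  rw [← hsum, ← hcard] at key
  have hMℓ : M ≤ ℓ := Finset.sup_le fun a ha => (hd a ha).2
  have : ∑ a ∈ F, 2 ^ d a + 2 ≤ (n - M + 2) * 2 ^ M := by
    calc ∑ a ∈ F, 2 ^ d a + 2 ≤ (#F + 2 - M) * 2 ^ M := by rw [Nat.sub_mul]; omega
      _ ≤ (n - M + 2) * 2 ^ M := Nat.mul_le_mul_right _ (by omega)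
  have := monotone_sub_add_two_mul_two_pow n hMℓ
  simp only at this
  omega

section SwitchGraph

omit [Fintype V] [DecidableEq V]

def IsStop (S : Finset V) (u : V ⊕ Bool) : Prop := (∃ s ∈ S, u = Sum.inl s) ∨ DestP u

@[simp] lemma isStop_inl {S : Finset V} {v : V} : IsStop S (Sum.inl v) ↔ v ∈ S := by
  simp [IsStop, DestP]

@[simp] lemma isStop_inr (S : Finset V) (b : Bool) : IsStop S (Sum.inr b) := by
  simp [IsStop, DestP]

lemma exists_eq_inl_of_not_isStop {S : Finset V} {u : V ⊕ Bool} (h : ¬ IsStop S u) :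
    ∃ v ∉ S, u = Sum.inl v := by
  rcases u with v | b
  · exact ⟨v, fun hv => h (isStop_inl.2 hv), rfl⟩
  · exact absurd (isStop_inr S b) h

namespace Arrival

variable (A : Arrival V)

def target (v : V) (b : Bool) : V ⊕ Bool := if b then A.sOdd v else A.sEven v

lemma edge_target (v : V) (b : Bool) : A.Edge (Sum.inl v) (A.target v b) := by
  cases b <;> simp [Edge, target]

lemma exists_target_of_edge {v : V} {u : V ⊕ Bool} (h : A.Edge (Sum.inl v) u) :
    ∃ b, u = A.target v b := by
  obtain ⟨x, hx, hu | hu⟩ := h <;> cases Sum.inl_injective hx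
  exacts [⟨false, hu⟩, ⟨true, hu⟩]

lemma pathLen_zero {u : V ⊕ Bool} {P : V ⊕ Bool → Prop} (h : P u) : A.PathLen u P 0 :=
  ⟨fun _ => u, rfl, h, by simp⟩

lemma PathLen.cons {P : V ⊕ Bool → Prop} {v : V} {b : Bool} {m : ℕ}
    (h : A.PathLen (A.target v b) P m) : A.PathLen (Sum.inl v) P (m + 1) := by
  obtain ⟨f, hf0, hfP, hfE⟩ := h
  refine ⟨fun i => if i = 0 then Sum.inl v else f (i - 1), by simp, by simpa using hfP, ?_⟩
  rintro (_ | i) hi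
  · simpa [hf0] using A.edge_target v b
  · simpa using hfE i (by omega)

lemma PathLen.tail {P : V ⊕ Bool → Prop} {v : V} {m : ℕ} (h : A.PathLen (Sum.inl v) P (m + 1)) :
    ∃ b, A.PathLen (A.target v b) P m := by
  obtain ⟨f, hf0, hfP, hfE⟩ := h
  obtain ⟨b, hb⟩ := A.exists_target_of_edge (hf0 ▸ hfE 0 (by omega))
  exact ⟨b, fun i => f (i + 1), hb, hfP, fun i hi => hfE (i + 1) (by omega)⟩

/-- `0` when no stopping vertex is reachable. -/
noncomputable def depth (S : Finset V) (u : V ⊕ Bool) : ℕ := sInf {m | A.PathLen u (IsStop S) m}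

variable {A} {S : Finset V}

lemma depth_le {u : V ⊕ Bool} {m : ℕ} (h : A.PathLen u (IsStop S) m) : A.depth S u ≤ m :=
  Nat.sInf_le h

lemma pathLen_depth {u : V ⊕ Bool} (h : ∃ m, A.PathLen u (IsStop S) m) :
    A.PathLen u (IsStop S) (A.depth S u) :=
  Nat.sInf_mem h

lemma depth_eq_zero_of_isStop {u : V ⊕ Bool} (h : IsStop S u) : A.depth S u = 0 :=
  Nat.le_zero.1 (depth_le (A.pathLen_zero h))

lemma isStop_of_depth_eq_zero {u : V ⊕ Bool} (hu : ∃ m, A.PathLen u (IsStop S) m)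
    (h : A.depth S u = 0) : IsStop S u := by
  obtain ⟨f, hf0, hfP, -⟩ := pathLen_depth hu
  rwa [h, hf0] at hfP

section Reachable

variable (hreach : ∀ u, ∃ m, A.PathLen u (IsStop S) m)
include hreach

lemma depth_le_depth_target_add_one (v : V) (b : Bool) :
    A.depth S (Sum.inl v) ≤ A.depth S (A.target v b) + 1 :=
  depth_le (pathLen_depth (hreach _)).cons

lemma exists_depth_target_add_one {v : V} (hv : v ∉ S) :
    ∃ b, A.depth S (A.target v b) + 1 = A.depth S (Sum.inl v) := by
  obtain ⟨m, hm⟩ : ∃ m, A.depth S (Sum.inl v) = m + 1 :=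
    Nat.exists_eq_add_one.2 (Nat.pos_of_ne_zero fun h => hv (by
      simpa using isStop_of_depth_eq_zero (hreach _) h))
  obtain ⟨b, hb⟩ := (hm ▸ pathLen_depth (hreach (Sum.inl v))).tail
  have := depth_le hb
  have := depth_le_depth_target_add_one hreach v b
  exact ⟨b, by omega⟩

end Reachable

end Arrival

end SwitchGraph

section SingleTrain

omit [Fintype V]

/-- As in `Arrival.runStep`, `s.2 v = true` means that the current successor of `v` is the odd
one. -/
def Arrival.trainStep (A : Arrival V) (S : Finset V) (s : (V ⊕ Bool) × (V → Bool)) :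
    (V ⊕ Bool) × (V → Bool) :=
  match s.1 with
  | Sum.inl v => if v ∈ S then s else (A.target v (s.2 v), Function.update s.2 v (!s.2 v))
  | Sum.inr _ => s

variable {A : Arrival V} {S : Finset V}

lemma Arrival.trainStep_of_isStop {s : (V ⊕ Bool) × (V → Bool)} (h : IsStop S s.1) :
    A.trainStep S s = s := by
  obtain ⟨u, sw⟩ := s
  rcases u with v | b
  · simp [trainStep, isStop_inl.1 h]
  · rfl

lemma Arrival.trainStep_inl {v : V} (hv : v ∉ S) (sw : V → Bool) :
    A.trainStep S (Sum.inl v, sw) = (A.target v (sw v), Function.update sw v (!sw v)) := by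
  simp [trainStep, hv]

lemma Arrival.trainStep_snd_of_ne {s : (V ⊕ Bool) × (V → Bool)} {v : V} (h : s.1 ≠ Sum.inl v) :
    (A.trainStep S s).2 v = s.2 v := by
  by_cases hs : IsStop S s.1
  · rw [trainStep_of_isStop hs]
  · obtain ⟨w, hw, hsw⟩ := exists_eq_inl_of_not_isStop hs
    obtain ⟨u, sw⟩ := s
    cases hsw
    rw [trainStep_inl hw]
    exact Function.update_of_ne (fun hvw => h (congrArg Sum.inl hvw.symm)) _ _

def visitTimes (p : ℕ → (V ⊕ Bool) × (V → Bool)) (u : V ⊕ Bool) (N : ℕ) : Finset ℕ :=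
  {j ∈ range N | (p j).1 = u}

def exitTimes (p : ℕ → (V ⊕ Bool) × (V → Bool)) (v : V) (b : Bool) (N : ℕ) : Finset ℕ :=
  {j ∈ range N | (p j).1 = Sum.inl v ∧ (p j).2 v = b}

variable (A S) in
/-- A time `j ≤ T` with `depth (p j).1 + j = T` is *tight*: from there the train runs straight
to its stop. -/
def VisitBound (p : ℕ → (V ⊕ Bool) × (V → Bool)) (T : ℕ) (u : V ⊕ Bool) : Prop :=
  #(visitTimes p u (T + 1)) ≤ 2 ^ A.depth S u ∧
    (#(visitTimes p u (T + 1)) = 2 ^ A.depth S u →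
      ∃ j ∈ visitTimes p u (T + 1), A.depth S u + j = T)

variable {p : ℕ → (V ⊕ Bool) × (V → Bool)}

lemma card_visitTimes_of_isStop {T : ℕ} (hT : IsStop S (p T).1) {v : V} (hv : v ∉ S) :
    #(visitTimes p (Sum.inl v) (T + 1)) = #(visitTimes p (Sum.inl v) T) := by
  rw [visitTimes, card_filter_range_succ, ← visitTimes,
    if_neg fun h => hv (by simpa [h] using hT), add_zero]

variable (hp : ∀ j, p (j + 1) = A.trainStep S (p j))
include hp

lemma fst_succ_of_eq_inl {j : ℕ} {v : V} (hv : v ∉ S) (h : (p j).1 = Sum.inl v) :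
    (p (j + 1)).1 = A.target v ((p j).2 v) := by
  rw [hp, show p j = (Sum.inl v, (p j).2) from Prod.ext h rfl, Arrival.trainStep_inl hv]

lemma edge_fst_succ {j : ℕ} (h : ¬ IsStop S (p j).1) : A.Edge (p j).1 (p (j + 1)).1 := by
  obtain ⟨v, hv, hpv⟩ := exists_eq_inl_of_not_isStop h
  rw [hpv, fst_succ_of_eq_inl hp hv hpv]
  exact A.edge_target v _

lemma snd_eq_xor_bodd {v : V} (hv : v ∉ S) (j : ℕ) :
    (p j).2 v = ((p 0).2 v ^^ (#(visitTimes p (Sum.inl v) j)).bodd) := by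
  induction j with
  | zero => simp [visitTimes]
  | succ j ih =>
    rw [visitTimes, card_filter_range_succ, ← visitTimes]
    by_cases h : (p j).1 = Sum.inl v
    · rw [hp, show p j = (Sum.inl v, (p j).2) from Prod.ext h rfl, Arrival.trainStep_inl hv]
      simp [ih]
    · rw [hp, Arrival.trainStep_snd_of_ne h, ih, if_neg h, add_zero]

lemma card_exitTimes {v : V} (hv : v ∉ S) (b : Bool) (N : ℕ) :
    #(exitTimes p v b N) = sideCount ((p 0).2 v) b #(visitTimes p (Sum.inl v) N) := by
  induction N with
  | zero => simp [exitTimes, visitTimes]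
  | succ N ih =>
    rw [exitTimes, visitTimes, card_filter_range_succ, card_filter_range_succ, ← exitTimes,
      ← visitTimes, ih]
    by_cases h : (p N).1 = Sum.inl v
    · simp [h, sideCount_succ, snd_eq_xor_bodd hp hv N]
    · simp [h]

lemma image_exitTimes_subset {v : V} (hv : v ∉ S) (b : Bool) (N : ℕ) :
    (exitTimes p v b N).image (· + 1) ⊆ visitTimes p (A.target v b) (N + 1) := by
  intro i hi
  obtain ⟨j, hj, rfl⟩ := mem_image.1 hi
  simp only [exitTimes, visitTimes, mem_filter, mem_range] at hj ⊢
  obtain ⟨hjN, hjv, hjb⟩ := hj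
  exact ⟨by omega, by rw [fst_succ_of_eq_inl hp hv hjv, hjb]⟩

lemma card_exitTimes_le {v : V} (hv : v ∉ S) (b : Bool) (N : ℕ) :
    #(exitTimes p v b N) ≤ #(visitTimes p (A.target v b) (N + 1)) := by
  rw [← card_image_of_injective _ (add_left_injective 1)]
  exact card_le_card (image_exitTimes_subset hp hv b N)

lemma forall_le_card_visitTimes_target {v : V} (hv : v ∉ S) (b : Bool)
    (h : ∀ K, ∃ N, K ≤ #(visitTimes p (Sum.inl v) N)) :
    ∀ K, ∃ N, K ≤ #(visitTimes p (A.target v b) N) := by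
  intro K
  obtain ⟨N, hN⟩ := h (2 * K + 1)
  have := le_two_mul_sideCount_add_one ((p 0).2 v) b #(visitTimes p (Sum.inl v) N)
  rw [← card_exitTimes hp hv] at this
  exact ⟨N + 1, by have := card_exitTimes_le hp hv b N; omega⟩

section Stopped

variable {T : ℕ} (hT : IsStop S (p T).1) (hfirst : ∀ j < T, ¬ IsStop S (p j).1)
include hT hfirst

lemma depth_add_le {j : ℕ} (hj : j ≤ T) : A.depth S (p j).1 + j ≤ T := by
  have : A.PathLen (p j).1 (IsStop S) (T - j) :=
    ⟨fun i => (p (j + i)).1, rfl, by simpa [Nat.add_sub_cancel' hj],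
      fun i hi => edge_fst_succ hp (hfirst _ (by omega))⟩
  have := Arrival.depth_le this
  omega

variable (hreach : ∀ u, ∃ m, A.PathLen u (IsStop S) m)
include hreach

/-- The depth drops by at most one per step and never exceeds the remaining time, so tightness
persists. -/
lemma depth_add_eq_of_le {i j : ℕ} (hji : j ≤ i) (hiT : i ≤ T) (h : A.depth S (p j).1 + j = T) :
    A.depth S (p i).1 + i = T := by
  induction i, hji using Nat.le_induction with
  | base => exact h
  | succ i hji ih =>
    obtain ⟨v, hv, hpv⟩ := exists_eq_inl_of_not_isStop (hfirst i (by omega))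
    have := Arrival.depth_le_depth_target_add_one hreach v ((p i).2 v)
    rw [← hpv, ← fst_succ_of_eq_inl hp hv hpv] at this
    have := depth_add_le hp hT hfirst hiT
    have := ih (by omega)
    omega

lemma card_visitTimes_eq_of_tight {u : V ⊕ Bool} {j : ℕ} (hj : j ∈ visitTimes p u (T + 1))
    (h : A.depth S u + j = T) : #(visitTimes p u (T + 1)) = #(visitTimes p u j) + 1 := by
  obtain ⟨hjT, hju⟩ := mem_filter.1 hj
  rw [mem_range] at hjT
  have hlast : visitTimes p u (T + 1) = visitTimes p u (j + 1) := by
    ext i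
    simp only [visitTimes, mem_filter, mem_range, and_congr_left_iff]
    intro hiu
    refine ⟨fun hi => ?_, fun hi => by omega⟩
    by_contra hij
    have := depth_add_eq_of_le hp hT hfirst hreach (i := i) (j := j) (by omega) (by omega)
      (hju ▸ h)
    rw [hiu] at this
    omega
  rw [hlast, visitTimes, card_filter_range_succ, if_pos hju, ← visitTimes]

lemma visitBound_inl_of_target {v : V} (hv : v ∉ S) {b : Bool}
    (hb : A.depth S (A.target v b) + 1 = A.depth S (Sum.inl v))
    (ih : VisitBound A S p T (A.target v b)) : VisitBound A S p T (Sum.inl v) := by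
  unfold VisitBound at ih ⊢
  set k := A.depth S (A.target v b)
  rw [← hb, pow_succ]
  have hE : #(exitTimes p v b T) = sideCount ((p 0).2 v) b #(visitTimes p (Sum.inl v) (T + 1)) := by
    rw [card_exitTimes hp hv, card_visitTimes_of_isStop hT hv]
  suffices h : 2 ^ k * 2 ≤ #(visitTimes p (Sum.inl v) (T + 1)) →
      #(visitTimes p (Sum.inl v) (T + 1)) = 2 ^ k * 2 ∧
        ∃ j ∈ visitTimes p (Sum.inl v) (T + 1), k + 1 + j = T by
    by_cases ha : 2 ^ k * 2 ≤ #(visitTimes p (Sum.inl v) (T + 1))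
    · exact ⟨(h ha).1.le, fun _ => (h ha).2⟩
    · exact ⟨by omega, by omega⟩
  intro ha
  have := le_two_mul_sideCount_add_one ((p 0).2 v) b #(visitTimes p (Sum.inl v) (T + 1))
  have := card_exitTimes_le hp hv b T
  have := ih.1
  -- the target is saturated, and all its visits come from departures of `v` on side `b`
  have hsat : #(exitTimes p v b T) = #(visitTimes p (A.target v b) (T + 1)) := by omega
  obtain ⟨s, hs, hsT⟩ := ih.2 (by omega)
  have himage := eq_of_subset_of_card_le (image_exitTimes_subset hp hv b T)
    (by rw [card_image_of_injective _ (add_left_injective 1), hsat])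
  obtain ⟨e, he, rfl⟩ := mem_image.1 (himage ▸ hs)
  simp only [exitTimes, mem_filter, mem_range] at he
  obtain ⟨heT, hev, heb⟩ := he
  -- so the last visit to `v` is the tight time `e`, at which `v` departs on side `b`
  have hlast := card_visitTimes_eq_of_tight hp hT hfirst hreach
    (mem_filter.2 ⟨mem_range.2 (by omega), hev⟩) (show A.depth S (Sum.inl v) + e = T by omega)
  have hsucc := sideCount_succ ((p 0).2 v) b #(visitTimes p (Sum.inl v) e)
  rw [← snd_eq_xor_bodd hp hv e, heb, if_pos rfl, ← hlast, ← hE] at hsucc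
  have := le_two_mul_sideCount_add_one ((p 0).2 v) b #(visitTimes p (Sum.inl v) e)
  exact ⟨by omega, e, mem_filter.2 ⟨mem_range.2 (by omega), hev⟩, by omega⟩

lemma visitBound (u : V ⊕ Bool) : VisitBound A S p T u := by
  induction hk : A.depth S u using Nat.strong_induction_on generalizing u with
  | _ k ih =>
  subst hk
  by_cases hstop : IsStop S u
  · have hsub : visitTimes p u (T + 1) ⊆ {T} := fun j hj => by
      obtain ⟨hjT, hju⟩ := mem_filter.1 hj
      have := mem_range.1 hjT
      exact mem_singleton.2 (by by_contra; exact hfirst j (by omega) (hju ▸ hstop))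
    rw [VisitBound, Arrival.depth_eq_zero_of_isStop hstop]
    refine ⟨by simpa using card_le_card hsub, fun h => ⟨T, ?_, by omega⟩⟩
    rw [eq_of_subset_of_card_le hsub (by simp [h])]
    exact mem_singleton_self T
  · obtain ⟨v, hv, rfl⟩ := exists_eq_inl_of_not_isStop hstop
    obtain ⟨b, hb⟩ := Arrival.exists_depth_target_add_one hreach hv
    exact visitBound_inl_of_target hp hT hfirst hreach hv hb (ih _ (by omega) _ rfl)

end Stopped

end SingleTrain

namespace Arrival

variable (A : Arrival V)

/-- The number of trains arriving at `u` when each `w` dispatches `c w` trains one at a time,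
its switch initially pointing to side `sw w`. -/
def inflow (sw : V → Bool) (c : V → ℕ) (u : V ⊕ Bool) : ℕ :=
  ∑ w, ∑ b, if A.target w b = u then sideCount (sw w) b (c w) else 0

@[simp] lemma inflow_zero (sw : V → Bool) (u : V ⊕ Bool) : A.inflow sw 0 u = 0 := by
  simp [inflow]

lemma inflow_mono (sw : V → Bool) {c c' : V → ℕ} (h : c ≤ c') (u : V ⊕ Bool) :
    A.inflow sw c u ≤ A.inflow sw c' u :=
  sum_le_sum fun w _ => sum_le_sum fun b _ => by
    split
    · exact sideCount_mono _ _ (h w)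
    · exact le_rfl

lemma inflow_add (sw : V → Bool) (c c' : V → ℕ) (u : V ⊕ Bool) :
    A.inflow sw (c + c') u = A.inflow sw c u + A.inflow (fun w => sw w ^^ (c w).bodd) c' u := by
  simp only [inflow, ← sum_add_distrib]
  refine sum_congr rfl fun w _ => sum_congr rfl fun b _ => ?_
  split <;> simp [sideCount_add]

lemma inflow_single (sw : V → Bool) (v : V) (τ : ℕ) (u : V ⊕ Bool) :
    A.inflow sw (Pi.single v τ) u =
      ∑ b, if A.target v b = u then sideCount (sw v) b τ else 0 := by
  rw [inflow, sum_eq_single v]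
  · simp
  · intro w _ hw
    simp [hw]
  · simp

end Arrival

section SingleTrainFlow

variable {A : Arrival V} {S : Finset V} {p : ℕ → (V ⊕ Bool) × (V → Bool)}

lemma exists_forall_le_card_visitTimes : ∃ u, ∀ K, ∃ N, K ≤ #(visitTimes p u N) := by
  by_contra! h
  choose K hK using h
  have hcard := card_eq_sum_card_fiberwise (f := fun j => (p j).1) (s := range (∑ u, K u))
    (t := univ) fun _ _ => mem_coe.2 (mem_univ _)
  rw [card_range] at hcard
  have := sum_lt_sum_of_nonempty univ_nonempty fun u _ => hK u (∑ u, K u)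
  simp only [visitTimes] at this
  omega

variable (hp : ∀ j, p (j + 1) = A.trainStep S (p j))
include hp

/-- A vertex visited unboundedly often passes this on to a successor of smaller depth, until a
stopping vertex is reached. -/
lemma exists_isStop (hreach : ∀ u, ∃ m, A.PathLen u (IsStop S) m) : ∃ T, IsStop S (p T).1 := by
  obtain ⟨u, hu⟩ := exists_forall_le_card_visitTimes (p := p)
  induction hk : A.depth S u using Nat.strong_induction_on generalizing u with
  | _ k ih =>
  by_cases hstop : IsStop S u
  · obtain ⟨N, hN⟩ := hu 1
    obtain ⟨j, hj⟩ := card_pos.1 hN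
    exact ⟨j, (mem_filter.1 hj).2 ▸ hstop⟩
  · obtain ⟨v, hv, rfl⟩ := exists_eq_inl_of_not_isStop hstop
    obtain ⟨b, hb⟩ := Arrival.exists_depth_target_add_one hreach hv
    exact ih _ (by omega) _ (forall_le_card_visitTimes_target hp hv b hu) rfl

lemma card_visitTimes_succ {N : ℕ} (hN : ∀ j < N, ¬ IsStop S (p j).1) (u : V ⊕ Bool) :
    #(visitTimes p u (N + 1)) = (if (p 0).1 = u then 1 else 0) +
      A.inflow (p 0).2 (fun w => #(visitTimes p (Sum.inl w) N)) u := by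
  induction N with
  | zero => simp [visitTimes, Arrival.inflow, filter_singleton]; split <;> rfl
  | succ N ih =>
    obtain ⟨w, hw, hpw⟩ := exists_eq_inl_of_not_isStop (hN N (by omega))
    have hcount : (fun x => #(visitTimes p (Sum.inl x) (N + 1))) =
        (fun x => #(visitTimes p (Sum.inl x) N)) + Pi.single w 1 := by
      funext x
      simp only [visitTimes, card_filter_range_succ, hpw, Pi.add_apply, Pi.single_apply,
        Sum.inl.injEq, eq_comm]
    rw [visitTimes, card_filter_range_succ, ← visitTimes, ih fun j hj => hN j (by omega), hcount,
      A.inflow_add, A.inflow_single, add_assoc, fst_succ_of_eq_inl hp hw hpw,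
      snd_eq_xor_bodd hp hw N]
    generalize (p 0).2 w = c, (#(visitTimes p (Sum.inl w) N)).bodd = d
    cases c <;> cases d <;> simp [sideCount_one]

end SingleTrainFlow

namespace Arrival

variable {A : Arrival V} {S : Finset V}

variable (A S) in
/-- Departure counts `c` that can dispatch the trains `t`. -/
def IsSupersolution (sw : V → Bool) (t c : V → ℕ) : Prop :=
  ∀ v ∉ S, t v + A.inflow sw c (Sum.inl v) ≤ c v

/-- The second batch is dispatched from the switch positions left behind by the first. -/
lemma IsSupersolution.add {sw : V → Bool} {t t' a c : V → ℕ} (ha : A.IsSupersolution S sw t a)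
    (hc : A.IsSupersolution S (fun v => sw v ^^ (a v).bodd) t' c) :
    A.IsSupersolution S sw (t + t') (a + c) := by
  intro v hv
  have := ha v hv
  have := hc v hv
  rw [Pi.add_apply, Pi.add_apply, inflow_add]
  omega

variable (hreach : ∀ u, ∃ m, A.PathLen u (IsStop S) m)
include hreach

/-- The visit counts of a single train run from `v₀` until it stops. -/
lemma exists_isSupersolution_single (v₀ : V) (sw : V → Bool) :
    ∃ a, A.IsSupersolution S sw (Pi.single v₀ 1) a ∧
      ∑ v, a v ≤ ∑ v ∈ univ \ S, 2 ^ A.depth S (Sum.inl v) := by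
  classical
  set p : ℕ → (V ⊕ Bool) × (V → Bool) := fun j => (A.trainStep S)^[j] (Sum.inl v₀, sw)
  have hp : ∀ j, p (j + 1) = A.trainStep S (p j) := fun j => Function.iterate_succ_apply' _ _ _
  have hstop := exists_isStop hp hreach
  have hT := Nat.find_spec hstop
  have hfirst : ∀ j < Nat.find hstop, ¬ IsStop S (p j).1 := fun j => Nat.find_min hstop
  refine ⟨fun v => #(visitTimes p (Sum.inl v) (Nat.find hstop)), fun v hv => ?_, ?_⟩
  · have := card_visitTimes_succ hp hfirst (Sum.inl v)
    rw [card_visitTimes_of_isStop hT hv] at this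
    simp [this, p, Pi.single_apply, eq_comm]
  · rw [← sum_subset (subset_univ (univ \ S)) fun v _ hv => ?_]
    · refine sum_le_sum fun v hv => ?_
      have hv : v ∉ S := (mem_sdiff.1 hv).2
      rw [← card_visitTimes_of_isStop hT hv]
      exact (visitBound hp hT hfirst hreach _).1
    · refine card_eq_zero.2 (filter_eq_empty_iff.2 fun j hj hjv => ?_)
      exact hfirst j (mem_range.1 hj) (hjv ▸ isStop_inl.2 (by simpa using hv))

lemma exists_isSupersolution (R : ℕ) (t : V → ℕ) (sw : V → Bool)
    (hR : ∑ v ∈ univ \ S, t v = R) :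
    ∃ c, A.IsSupersolution S sw t c ∧
      ∑ v, c v ≤ R * ∑ v ∈ univ \ S, 2 ^ A.depth S (Sum.inl v) := by
  induction R generalizing t sw with
  | zero =>
    refine ⟨0, fun v hv => ?_, by simp⟩
    simp [sum_eq_zero_iff.1 hR v (by simpa using hv)]
  | succ R ih =>
    obtain ⟨v₀, hv₀, ht₀⟩ := exists_ne_zero_of_sum_ne_zero (by rw [hR]; omega)
    have hle : Pi.single v₀ 1 ≤ t := fun v => by
      by_cases hv : v = v₀
      · subst hv
        simpa [Nat.one_le_iff_ne_zero] using ht₀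
      · simp [hv]
    obtain ⟨a, ha, ha_sum⟩ := exists_isSupersolution_single hreach v₀ sw
    obtain ⟨c, hc, hc_sum⟩ := ih (t - Pi.single v₀ 1) (fun v => sw v ^^ (a v).bodd) (by
      simp only [Pi.sub_apply]
      rw [sum_tsub_distrib _ fun v _ => hle v, hR, sum_pi_single', if_pos hv₀]; rfl)
    refine ⟨a + c, add_tsub_cancel_of_le hle ▸ ha.add hc, ?_⟩
    rw [Pi.add_def, sum_add_distrib, Nat.succ_mul]
    omega

lemma sum_two_pow_depth_le {n ℓ : ℕ} (hn : Fintype.card V = n)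
    (hℓ : ∀ v ∉ S, A.depth S (Sum.inl v) ≤ ℓ) :
    ∑ v ∈ univ \ S, 2 ^ A.depth S (Sum.inl v) ≤ (n - ℓ + 2) * 2 ^ ℓ - 2 := by
  refine sum_two_pow_le _ _ (hn ▸ card_le_univ _) (fun v hv => ⟨?_, hℓ v (mem_sdiff.1 hv).2⟩)
    (fun v hv hv2 => ?_)
  · exact Nat.one_le_iff_ne_zero.2 fun h =>
      (mem_sdiff.1 hv).2 (isStop_inl.1 (isStop_of_depth_eq_zero (hreach _) h))
  · obtain ⟨b, hb⟩ := exists_depth_target_add_one hreach (mem_sdiff.1 hv).2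
    have hstop : ¬ IsStop S (A.target v b) := fun h => by
      rw [depth_eq_zero_of_isStop h] at hb; omega
    obtain ⟨w, hw, hvw⟩ := exists_eq_inl_of_not_isStop hstop
    exact ⟨w, mem_sdiff.2 ⟨mem_univ w, hw⟩, hvw ▸ hb⟩

end Arrival

lemma Arrival.curr_add_nxt_eq_inflow_single (A : Arrival V) (s : MState V) (v : V) (τ : ℕ)
    (u : V ⊕ Bool) :
    ((if A.curr s v = u then (τ + 1) / 2 else 0) + if A.nxt s v = u then τ / 2 else 0) =
      A.inflow s.sw (Pi.single v τ) u := by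
  rw [A.inflow_single, Fintype.sum_bool]
  cases h : s.sw v <;> simp [Arrival.curr, Arrival.nxt, Arrival.target, sideCount, h, add_comm]

/-- `c v` trains have left `v` since the state `s₀`. -/
structure Arrival.IsProfile (A : Arrival V) (s₀ s : MState V) (c : V → ℕ) : Prop where
  trains : ∀ v, s.t (Sum.inl v) + c v = s₀.t (Sum.inl v) + A.inflow s₀.sw c (Sum.inl v)
  ev : ∀ v, s.ev v = s₀.ev v + sideCount (s₀.sw v) false (c v)
  od : ∀ v, s.od v = s₀.od v + sideCount (s₀.sw v) true (c v)
  sw : ∀ v, s.sw v = (s₀.sw v ^^ (c v).bodd)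

namespace Arrival.IsProfile

variable {A : Arrival V} {s₀ s s' : MState V} {c : V → ℕ} {v : V} {τ : ℕ}

lemma zero (A : Arrival V) (s₀ : MState V) : A.IsProfile s₀ s₀ 0 where
  trains _ := by simp
  ev _ := by simp
  od _ := by simp
  sw _ := by simp

lemma step (h : A.IsProfile s₀ s c) (hs : MStepAt A v τ s s') :
    A.IsProfile s₀ s' (c + Pi.single v τ) := by
  obtain ⟨-, hτ, hev, hod, ht, hsw⟩ := hs
  constructor
  case trains =>
    intro w
    have hsw₀ : (fun w => s₀.sw w ^^ (c w).bodd) = s.sw := funext fun w => (h.sw w).symm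
    have := h.trains w
    rw [ht, A.inflow_add, hsw₀, ← curr_add_nxt_eq_inflow_single, Pi.add_apply, Pi.single_apply]
    by_cases hw : w = v
    · subst hw; simp only [if_true]; omega
    · simp only [if_neg hw, Sum.inl.injEq]; omega
  case ev | od =>
    intro w
    by_cases hw : w = v
    · subst hw
      simp only [hev, hod, h.ev, h.od, h.sw, Pi.add_apply, Pi.single_eq_same, if_true,
        sideCount_add]
      cases s₀.sw w ^^ (c w).bodd <;> simp [sideCount, add_assoc]
    · simp [hev, hod, h.ev, h.od, hw]
  case sw =>
    intro w
    by_cases hw : w = v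
    · subst hw
      simp [hsw, h.sw, Nat.bodd_add, mod_two_beq_one_eq_bodd]
    · simp [hsw, h.sw, hw]

/-- Minimality of the Multi-Run profile: the `τ` trains moved out of `v` are already counted in
the initial trains or the inflow that a supersolution must dispatch. -/
lemma add_single_le {S : Finset V} {cs : V → ℕ} (h : A.IsProfile s₀ s c)
    (hs : MStepAt A v τ s s') (hv : v ∉ S) (hc : c ≤ cs)
    (hcs : A.IsSupersolution S s₀.sw (fun w => s₀.t (Sum.inl w)) cs) :
    c + Pi.single v τ ≤ cs := by
  intro w
  by_cases hw : w = v
  · subst hw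
    have := h.trains w
    have := A.inflow_mono s₀.sw hc (Sum.inl w)
    have : s₀.t (Sum.inl w) + _ ≤ _ := hcs w hv
    have := hs.2.1
    simp only [Pi.add_apply, Pi.single_eq_same]
    omega
  · simpa [hw] using hc w

lemma sum_ev_add_od (h : A.IsProfile s₀ s c) :
    ∑ v, (s.ev v + s.od v) = ∑ v, (s₀.ev v + s₀.od v) + ∑ v, c v := by
  rw [← sum_add_distrib]
  refine sum_congr rfl fun v _ => ?_
  have := sideCount_false_add_true (s₀.sw v) (c v)
  rw [h.ev, h.od]
  omega

end Arrival.IsProfile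

theorem multirun_continuation_bound_general (A : Arrival V)
    (S : Finset V) (n ℓ : ℕ) (hn : Fintype.card V = n)
    (hpath : ∀ v : V, v ∉ S → ∃ m ≤ ℓ,
      A.PathLen (Sum.inl v) (fun u => (∃ s ∈ S, u = Sum.inl s) ∨ DestP u) m)
    (s₀ : MState V) (R : ℕ) (hR : R = ∑ v ∈ Finset.univ \ S, s₀.t (Sum.inl v))
    (m : ℕ) (f : ℕ → MState V) (h0 : f 0 = s₀)
    (hstep : ∀ i < m, MStep A S (f i) (f (i + 1))) :
    (∑ v : V, ((f m).ev v + (f m).od v)) ≤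
      (∑ v : V, (s₀.ev v + s₀.od v)) + R * ((n - ℓ + 2) * 2 ^ ℓ - 2) := by
  have hreach : ∀ u, ∃ m, A.PathLen u (IsStop S) m := fun u => by
    by_cases hu : IsStop S u
    · exact ⟨0, A.pathLen_zero hu⟩
    · obtain ⟨v, hv, rfl⟩ := exists_eq_inl_of_not_isStop hu
      obtain ⟨m, -, hm⟩ := hpath v hv
      exact ⟨m, hm⟩
  have hℓ : ∀ v ∉ S, A.depth S (Sum.inl v) ≤ ℓ := fun v hv => by
    obtain ⟨m, hmℓ, hm⟩ := hpath v hv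
    exact (Arrival.depth_le hm).trans hmℓ
  obtain ⟨cs, hcs, hcs_sum⟩ := Arrival.exists_isSupersolution hreach R _ s₀.sw hR.symm
  have hprofile : ∀ i ≤ m, ∃ c ≤ cs, A.IsProfile s₀ (f i) c := by
    intro i hi
    induction i with
    | zero => exact ⟨0, fun _ => Nat.zero_le _, h0 ▸ Arrival.IsProfile.zero A s₀⟩
    | succ i ih =>
      obtain ⟨c, hc, h⟩ := ih (by omega)
      obtain ⟨v, hv, τ, hs⟩ := hstep i (by omega)
      exact ⟨_, h.add_single_le hs hv hc hcs, h.step hs⟩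
  obtain ⟨c, hc, h⟩ := hprofile m le_rfl
  rw [h.sum_ev_add_od]
  have := sum_le_sum fun v (_ : v ∈ univ) => hc v
  have := Nat.mul_le_mul_left R (Arrival.sum_two_pow_depth_le hreach hn hℓ)
  omega

/-- If every vertex outside `S` has a path of length at most `ℓ` to `{d, d̄} ∪ S`, then
any continuation of the Multi-Run procedure from a configuration with `R` waiting trains
performs at most `R * ((n - ℓ + 2) * 2 ^ ℓ - 2)` further edge traversals. -/
theorem multirun_continuation_bound (A : Arrival V) (hA : A.Terminating)
    (S : Finset V) (n ℓ : ℕ) (hn : Fintype.card V = n)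
    (hpath : ∀ v : V, v ∉ S → ∃ m ≤ ℓ,
      A.PathLen (Sum.inl v) (fun u => (∃ s ∈ S, u = Sum.inl s) ∨ DestP u) m)
    (s₀ : MState V) (R : ℕ) (hR : R = ∑ v ∈ Finset.univ \ S, s₀.t (Sum.inl v))
    (m : ℕ) (f : ℕ → MState V) (h0 : f 0 = s₀)
    (hstep : ∀ i < m, MStep A S (f i) (f (i + 1))) :
    (∑ v : V, ((f m).ev v + (f m).od v)) ≤
      (∑ v : V, (s₀.ev v + s₀.od v)) + R * ((n - ℓ + 2) * 2 ^ ℓ - 2) :=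
  multirun_continuation_bound_general A S n ℓ hn hpath s₀ R hR m f h0 hstep
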